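/- Let d ≥ 1, let y₁, …, y_n ∈ ℝ^d (n ≥ 1), and let G(z) = min_{1 ≤ i ≤ n} ‖z − y_i‖². Define G*(x) = sup_z (⟨x,z⟩ − G(z)) and G**(z) = sup_x (⟨x,z⟩ − G*(x)). If y = Σᵢ cᵢ yᵢ with cᵢ ≥ 0 for all i and Σᵢ cᵢ = 1, then G**(z) ≤ ‖z − y‖² for all z ∈ ℝ^d. -/

import Mathlib

/-!
For each `i`, `G ≤ ‖· - yᵢ‖²`, whose conjugate is `x ↦ ⟪x, yᵢ⟫ + ‖x‖²/4`; hence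
`G*(x) ≥ ⟪x, yᵢ⟫ + ‖x‖²/4` for every `i`, and averaging with the weights `cᵢ` gives
`G*(x) ≥ ⟪x, ȳ⟫ + ‖x‖²/4`. Conjugating once more reverses the inequality, and the conjugate of
`x ↦ ⟪x, ȳ⟫ + ‖x‖²/4` is `‖· - ȳ‖²`.
-/

open scoped RealInnerProductSpace
noncomputable section

/-- Legendre transform: `f*(x) = sup_y (⟨x,y⟩ − f(y))`. -/
def conj {d : ℕ} (f : EuclideanSpace ℝ (Fin d) → ℝ)
    (x : EuclideanSpace ℝ (Fin d)) : ℝ :=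
  ⨆ y : EuclideanSpace ℝ (Fin d), (⟪x, y⟫ - f y)

open Set

lemma real_inner_le_norm_sq_add_norm_sq_div_four {E : Type*} [NormedAddCommGroup E]
    [InnerProductSpace ℝ E] (x w : E) : ⟪x, w⟫ ≤ ‖w‖ ^ 2 + ‖x‖ ^ 2 / 4 := by
  nlinarith [real_inner_le_norm x w, sq_nonneg (‖x‖ / 2 - ‖w‖)]

section

variable {d : ℕ}

lemma conj_le_of_forall_le {f : EuclideanSpace ℝ (Fin d) → ℝ} {x : EuclideanSpace ℝ (Fin d)}
    {b : ℝ} (h : ∀ w, ⟪x, w⟫ - f w ≤ b) : conj f x ≤ b :=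
  ciSup_le h

lemma inner_sub_le_conj_of_forall_le {f : EuclideanSpace ℝ (Fin d) → ℝ}
    {x : EuclideanSpace ℝ (Fin d)} {b : ℝ} (h : ∀ w, ⟪x, w⟫ - f w ≤ b)
    (w : EuclideanSpace ℝ (Fin d)) : ⟪x, w⟫ - f w ≤ conj f x :=
  le_ciSup ⟨b, forall_mem_range.2 h⟩ w

variable {ι : Type*} (y : ι → EuclideanSpace ℝ (Fin d))

lemma inner_add_norm_sq_div_four_le_conj_iInf_sq_dist [Finite ι] (x : EuclideanSpace ℝ (Fin d))
    (i : ι) :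
    ⟪x, y i⟫ + ‖x‖ ^ 2 / 4 ≤ conj (fun z => ⨅ j, ‖z - y j‖ ^ 2) x := by
  have : Nonempty ι := ⟨i⟩
  obtain ⟨M, hM⟩ := (finite_range fun j => ⟪x, y j⟫).bddAbove
  have hbound : ∀ z, ⟪x, z⟫ - ⨅ j, ‖z - y j‖ ^ 2 ≤ M + ‖x‖ ^ 2 / 4 := by
    intro z
    obtain ⟨j, hj⟩ := exists_eq_ciInf_of_finite (f := fun j => ‖z - y j‖ ^ 2)
    have hsplit : ⟪x, z⟫ = ⟪x, z - y j⟫ + ⟪x, y j⟫ := by rw [← inner_add_right, sub_add_cancel]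
    have := real_inner_le_norm_sq_add_norm_sq_div_four x (z - y j)
    have := hM (mem_range_self j)
    rw [← hj]
    linarith
  -- the maximiser of `⟪x, ·⟫ - ‖· - y i‖²` is `y i + x / 2`
  have hG : (⨅ j, ‖y i + (1 / 2 : ℝ) • x - y j‖ ^ 2) ≤ ‖x‖ ^ 2 / 4 := by
    refine ciInf_le_of_le ⟨0, forall_mem_range.2 fun _ => by positivity⟩ i ?_
    rw [add_sub_cancel_left, norm_smul, Real.norm_of_nonneg (by norm_num)]
    linarith
  have hinner : ⟪x, y i + (1 / 2 : ℝ) • x⟫ = ⟪x, y i⟫ + ‖x‖ ^ 2 / 2 := by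
    rw [inner_add_right, real_inner_smul_right, real_inner_self_eq_norm_sq]
    ring
  have := inner_sub_le_conj_of_forall_le hbound (y i + (1 / 2 : ℝ) • x)
  rw [hinner] at this
  linarith

lemma inner_sum_smul_add_norm_sq_div_four_le_conj_iInf_sq_dist [Fintype ι] (c : ι → ℝ)
    (hc : ∀ i, 0 ≤ c i) (hsum : ∑ i, c i = 1) (x : EuclideanSpace ℝ (Fin d)) :
    ⟪x, ∑ i, c i • y i⟫ + ‖x‖ ^ 2 / 4 ≤ conj (fun z => ⨅ j, ‖z - y j‖ ^ 2) x :=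
  calc ⟪x, ∑ i, c i • y i⟫ + ‖x‖ ^ 2 / 4 = ∑ i, c i * (⟪x, y i⟫ + ‖x‖ ^ 2 / 4) := by
        simp only [inner_sum, real_inner_smul_right, mul_add, Finset.sum_add_distrib,
          ← Finset.sum_mul, hsum, one_mul]
    _ ≤ ∑ i, c i * conj (fun z => ⨅ j, ‖z - y j‖ ^ 2) x :=
        Finset.sum_le_sum fun i _ =>
          mul_le_mul_of_nonneg_left (inner_add_norm_sq_div_four_le_conj_iInf_sq_dist y x i) (hc i)
    _ = conj (fun z => ⨅ j, ‖z - y j‖ ^ 2) x := by rw [← Finset.sum_mul, hsum, one_mul]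

lemma conj_le_sq_dist_of_inner_add_norm_sq_div_four_le {f : EuclideanSpace ℝ (Fin d) → ℝ}
    {a : EuclideanSpace ℝ (Fin d)}
    (hf : ∀ x, ⟪x, a⟫ + ‖x‖ ^ 2 / 4 ≤ f x) (z : EuclideanSpace ℝ (Fin d)) :
    conj f z ≤ ‖z - a‖ ^ 2 := by
  refine conj_le_of_forall_le fun x => ?_
  have hsplit : ⟪z, x⟫ = ⟪x, z - a⟫ + ⟪x, a⟫ := by
    rw [← inner_add_right, sub_add_cancel, real_inner_comm]
  have := real_inner_le_norm_sq_add_norm_sq_div_four x (z - a)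
  linarith [hf x]

end

theorem stmt16_general (d n : ℕ)
    (y : Fin n → EuclideanSpace ℝ (Fin d)) (c : Fin n → ℝ)
    (hc : ∀ i, 0 ≤ c i) (hsum : ∑ i, c i = 1)
    (ybar : EuclideanSpace ℝ (Fin d)) (hybar : ybar = ∑ i, c i • y i) :
    ∀ z : EuclideanSpace ℝ (Fin d),
      conj (conj (fun z' => ⨅ i : Fin n, ‖z' - y i‖ ^ 2)) z ≤ ‖z - ybar‖ ^ 2 := by
  subst hybar
  exact conj_le_sq_dist_of_inner_add_norm_sq_div_four_le
    (inner_sum_smul_add_norm_sq_div_four_le_conj_iInf_sq_dist y c hc hsum)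

theorem stmt16 (d n : ℕ) (hd : 1 ≤ d) (hn : 1 ≤ n)
    (y : Fin n → EuclideanSpace ℝ (Fin d)) (c : Fin n → ℝ)
    (hc : ∀ i, 0 ≤ c i) (hsum : ∑ i, c i = 1)
    (ybar : EuclideanSpace ℝ (Fin d)) (hybar : ybar = ∑ i, c i • y i) :
    ∀ z : EuclideanSpace ℝ (Fin d),
      conj (conj (fun z' => ⨅ i : Fin n, ‖z' - y i‖ ^ 2)) z ≤ ‖z - ybar‖ ^ 2 :=
  stmt16_general d n y c hc hsum ybar hybar
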